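/- For any dimension d ≥ 1, any number of workers N ≥ 2, any symmetric matrix A ∈ ℝ^{d×d}, and any M > 0, there exist vectors b_1,…,b_N ∈ ℝ^d with mean b = (1/N)∑_i b_i such that the quadratic objectives F_i(x) = ½xᵀA x + b_iᵀx (common Hessian A) simultaneously satisfy: (i) the heterogeneity-driven pseudo-Lipschitz condition with L_h = 0, i.e. (1/N)∑_i ∇F_i(x_i) = ∇f(x̄) for all x_1,…,x_N with average x̄; and (ii) the gradient divergence is at least M, i.e. ‖∇F_i(x) − ∇f(x)‖ = ‖b_i − b‖ ≥ M for some worker i (and all x). Hence L_h = 0 does not bound the gradient divergence ζ, which can be arbitrarily large. -/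

import Mathlib

open Finset

/-- **Proposition (`L_h = 0` with arbitrarily large gradient divergence).** For any
dimension `d ≥ 1`, any number of workers `N ≥ 2`, any symmetric `A` and any `M > 0`,
there exist `b₁,…,b_N` such that the quadratic objectives `F_i(x) = ½xᵀAx + b_iᵀx`
(common Hessian `A`, so `∇F_i(x) = Ax + b_i` and `∇f(x) = Ax + b` with
`b = (1/N)∑ b_i`) satisfy
(i) the pseudo-Lipschitz condition with `L_h = 0`:
`(1/N)∑ᵢ ∇F_i(xᵢ) = ∇f(x̄)` for all `x₁,…,x_N` with average `x̄`, and
(ii) `‖∇F_i(x) − ∇f(x)‖ = ‖b_i − b‖ ≥ M` for some worker `i` (and all `x`). -/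
theorem Lh_zero_with_arbitrarily_large_divergence
    (d N : ℕ) (hd : 1 ≤ d) (hN : 2 ≤ N)
    (A : EuclideanSpace ℝ (Fin d) →L[ℝ] EuclideanSpace ℝ (Fin d))
    (hsym : ∀ v w : EuclideanSpace ℝ (Fin d), inner ℝ (A v) w = (inner ℝ v (A w) : ℝ))
    (M : ℝ) (hM : 0 < M) :
    ∃ b : Fin N → EuclideanSpace ℝ (Fin d),
      (∀ x : Fin N → EuclideanSpace ℝ (Fin d),
        (N : ℝ)⁻¹ • ∑ i, (A (x i) + b i)
          = A ((N : ℝ)⁻¹ • ∑ i, x i) + (N : ℝ)⁻¹ • ∑ i, b i) ∧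
      (∃ i : Fin N, ∀ x : EuclideanSpace ℝ (Fin d),
        ‖(A x + b i) - (A x + (N : ℝ)⁻¹ • ∑ j, b j)‖ = ‖b i - (N : ℝ)⁻¹ • ∑ j, b j‖ ∧
        M ≤ ‖b i - (N : ℝ)⁻¹ • ∑ j, b j‖) := by
    classical
  set e : EuclideanSpace ℝ (Fin d) := EuclideanSpace.single ⟨0, hd⟩ 1 with he
  have hne : ‖e‖ = 1 := by simp [he]
  set v : EuclideanSpace ℝ (Fin d) := (2 * M) • e with hv
  set i0 : Fin N := ⟨0, by omega⟩ with hi0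
  refine ⟨fun i => if i = i0 then v else 0, ?_, ?_⟩
  · intro x
    simp only [Finset.sum_add_distrib, smul_add, ← map_sum, ← map_smul]
  · have hsum : (∑ j : Fin N, (if j = i0 then v else 0)) = v := by
      simp
    refine ⟨i0, fun x => ?_⟩
    have h1 : (if i0 = i0 then v else 0) = v := by simp
    simp only [hsum, h1, if_true]
    constructor
    · congr 1
      abel
    · have : v - (N : ℝ)⁻¹ • v = (1 - (N : ℝ)⁻¹) • v := by
        rw [sub_smul, one_smul]
      rw [this, norm_smul, hv, norm_smul, hne]
      have hN0 : (0:ℝ) < N := by positivity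
      have hNinv : (N : ℝ)⁻¹ ≤ 2⁻¹ := by
        rw [inv_le_inv₀ hN0 (by norm_num)]
        exact_mod_cast hN
      have h1N : (0:ℝ) ≤ 1 - (N : ℝ)⁻¹ := by
        have : (N:ℝ)⁻¹ ≤ 1 := hNinv.trans (by norm_num)
        linarith
      rw [Real.norm_eq_abs, Real.norm_eq_abs, abs_of_nonneg h1N,
        abs_of_pos (by linarith)]
      nlinarith
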